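/- arXiv:2302.00611 — 2 statements merged into one kernel-verified Lean document; each statement's English description precedes it below -/
import Mathlib

section
/- Let E be a finite-dimensional real inner product space, E₀ ⊆ E a subspace, Q a symmetric bilinear form on E₀, τ > 0, and t ↦ R_t a continuous family of self-adjoint operators on E. Then there exists ε ∈ (0,τ] such that the interval (0,ε] contains no focal points for the operator J = d²/dt² + R_t and boundary condition (E₀, Q). -/
open scoped RealInnerProductSpace
open MeasureTheory

variable {E : Type*} [NormedAddCommGroup E] [InnerProductSpace ℝ E]

/-- `f : ℝ → E` is continuous on `[a,b]` and piecewise `C^n` there, i.e. there is a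
finite partition `a = s₀ < s₁ < ⋯ < s_k = b` such that `f` is `C^n` on each closed
subinterval `[sᵢ, sᵢ₊₁]` (derivatives being taken one-sidedly at the endpoints). -/
def PiecewiseContDiffOn (n : ℕ) (f : ℝ → E) (a b : ℝ) : Prop :=
  ContinuousOn f (Set.Icc a b) ∧
  ∃ (k : ℕ) (s : Fin (k + 1) → ℝ), StrictMono s ∧ s 0 = a ∧ s (Fin.last k) = b ∧
    ∀ i : Fin k, ContDiffOn ℝ (n : ℕ∞) f (Set.Icc (s i.castSucc) (s i.succ))

/-- Membership in the space `Ω([0,τ],E)` of continuous piecewise `C²` curves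
`v : [0,τ] → E` with `v 0 ∈ E₀`, `⟪v' 0, w⟫ = -Q (v 0) w` for all `w ∈ E₀`, and `v τ = 0`. -/
def InOmega (E₀ : Submodule ℝ E) (Q : E →ₗ[ℝ] E →ₗ[ℝ] ℝ) (τ : ℝ) (v : ℝ → E) : Prop :=
  PiecewiseContDiffOn 2 v 0 τ ∧ v 0 ∈ E₀ ∧
  (∀ w ∈ E₀, ⟪derivWithin v (Set.Icc 0 τ) 0, w⟫ = -(Q (v 0) w)) ∧
  v τ = 0

/-- The index form `I(v) = -Q(v 0, v 0) + ∫₀^τ (⟪v', v'⟫ - ⟪R_t (v t), v t⟫) dt`. -/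
noncomputable def indexForm (R : ℝ → E →L[ℝ] E) (Q : E →ₗ[ℝ] E →ₗ[ℝ] ℝ) (τ : ℝ)
    (v : ℝ → E) : ℝ :=
  -(Q (v 0) (v 0)) + ∫ t in (0:ℝ)..τ,
    (⟪derivWithin v (Set.Icc 0 τ) t, derivWithin v (Set.Icc 0 τ) t⟫ - ⟪R t (v t), v t⟫)

/-- A `C²` curve `u : [0,a] → E` with `u'' + R_t u = 0` on `[0,a]`, `u 0 ∈ E₀`,
`⟪u' 0, w⟫ = -Q (u 0) w` for all `w ∈ E₀`, and `u a = 0`. -/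
def IsFocalSolution (R : ℝ → E →L[ℝ] E) (E₀ : Submodule ℝ E) (Q : E →ₗ[ℝ] E →ₗ[ℝ] ℝ)
    (a : ℝ) (u : ℝ → E) : Prop :=
  ContDiffOn ℝ 2 u (Set.Icc 0 a) ∧
  (∀ t ∈ Set.Icc 0 a,
    derivWithin (derivWithin u (Set.Icc 0 a)) (Set.Icc 0 a) t + R t (u t) = 0) ∧
  u 0 ∈ E₀ ∧
  (∀ w ∈ E₀, ⟪derivWithin u (Set.Icc 0 a) 0, w⟫ = -(Q (u 0) w)) ∧
  u a = 0

/-- `a ∈ (0,τ]` is a focal point for `J = d²/dt² + R_t` and boundary condition `(E₀, Q)`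
if there is a nontrivial solution on `[0,a]`. -/
def IsFocalPoint (R : ℝ → E →L[ℝ] E) (E₀ : Submodule ℝ E) (Q : E →ₗ[ℝ] E →ₗ[ℝ] ℝ)
    (τ a : ℝ) : Prop :=
  a ∈ Set.Ioc 0 τ ∧
  ∃ u : ℝ → E, IsFocalSolution R E₀ Q a u ∧ ∃ t ∈ Set.Icc 0 a, u t ≠ 0

/-- The multiplicity of a focal point: the maximal number of focal solutions on `[0,a]`
that are linearly independent as curves on `[0,a]`. -/
noncomputable def focalMultiplicity (R : ℝ → E →L[ℝ] E) (E₀ : Submodule ℝ E)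
    (Q : E →ₗ[ℝ] E →ₗ[ℝ] ℝ) (a : ℝ) : ℕ :=
  sSup {n : ℕ | ∃ u : Fin n → ℝ → E,
    (∀ i, IsFocalSolution R E₀ Q a (u i)) ∧
    ∀ c : Fin n → ℝ, (∀ t ∈ Set.Icc 0 a, (∑ i, c i • u i t) = 0) → c = 0}

/-- The set of `n` such that there are `n` elements of `Ω([0,τ],E)`, linearly independent
as curves on `[0,τ]`, on (the span of) which the index form is negative.  The Morse index
of the index form is the supremum of this set. -/
def MorseIndexSet (R : ℝ → E →L[ℝ] E) (E₀ : Submodule ℝ E) (Q : E →ₗ[ℝ] E →ₗ[ℝ] ℝ)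
    (τ : ℝ) : Set ℕ :=
  {n | ∃ v : Fin n → ℝ → E,
    (∀ i, InOmega E₀ Q τ (v i)) ∧
    (∀ c : Fin n → ℝ, (∀ t ∈ Set.Icc 0 τ, (∑ i, c i • v i t) = 0) → c = 0) ∧
    (∀ c : Fin n → ℝ, c ≠ 0 → indexForm R Q τ (fun t => ∑ i, c i • v i t) < 0)}

/-- `J = d²/dt² + R_t` is disconjugate on a set `s ⊆ ℝ`: no nontrivial `C²` solution of
`u'' + R_t u = 0` on `s` vanishes at two distinct points of `s`. -/
def DisconjugateOn (R : ℝ → E →L[ℝ] E) (s : Set ℝ) : Prop :=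
  ∀ u : ℝ → E, ContDiffOn ℝ 2 u s →
    (∀ t ∈ s, derivWithin (derivWithin u s) s t + R t (u t) = 0) →
    ∀ s₁ ∈ s, ∀ s₂ ∈ s, s₁ ≠ s₂ → u s₁ = 0 → u s₂ = 0 → ∀ t ∈ s, u t = 0

/-- `a < b` are mutually conjugate if there is a not-identically-zero `C²` solution of
`v'' + R_t v = 0` on `[a,b]` with `v a = v b = 0`. -/
def MutuallyConjugate (R : ℝ → E →L[ℝ] E) (a b : ℝ) : Prop :=
  a < b ∧ ∃ v : ℝ → E, ContDiffOn ℝ 2 v (Set.Icc a b) ∧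
    (∀ t ∈ Set.Icc a b,
      derivWithin (derivWithin v (Set.Icc a b)) (Set.Icc a b) t + R t (v t) = 0) ∧
    v a = 0 ∧ v b = 0 ∧ ∃ t ∈ Set.Icc a b, v t ≠ 0

lemma cs_aux' {f : ℝ → ℝ} {a : ℝ} (ha : 0 < a) (hf : ContinuousOn f (Set.Icc 0 a)) :
    (∫ t in (0:ℝ)..a, f t)^2 ≤ a * ∫ t in (0:ℝ)..a, (f t)^2 := by
  have huIcc : Set.uIcc (0:ℝ) a = Set.Icc 0 a := Set.uIcc_of_le ha.le
  have hint1 : IntervalIntegrable f MeasureTheory.volume 0 a :=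
    (hf.mono (by rw [huIcc])).intervalIntegrable
  have hint2 : IntervalIntegrable (fun t => (f t)^2) MeasureTheory.volume 0 a :=
    ((hf.pow 2).mono (by rw [huIcc])).intervalIntegrable
  set I1 := ∫ t in (0:ℝ)..a, f t with hI1
  set I2 := ∫ t in (0:ℝ)..a, (f t)^2 with hI2
  set c := I1 / a with hc
  have ha' : a ≠ 0 := ne_of_gt ha
  have h0 : 0 ≤ ∫ t in (0:ℝ)..a, (f t - c)^2 :=
    intervalIntegral.integral_nonneg ha.le (fun t _ => sq_nonneg _)
  have hexp : (∫ t in (0:ℝ)..a, (f t - c)^2) = I2 - 2*c*I1 + a*c^2 := by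
    have h : ∀ t, (f t - c)^2 = (f t)^2 - (2*c) * f t + c^2 := by intro t; ring
    simp only [h]
    rw [intervalIntegral.integral_add (hint2.sub (hint1.const_mul _)) intervalIntegrable_const,
      intervalIntegral.integral_sub hint2 (hint1.const_mul _),
      intervalIntegral.integral_const_mul, intervalIntegral.integral_const, smul_eq_mul]
    ring
  rw [hexp, hc] at h0
  have h2 : 0 ≤ I2 - I1^2/a := by
    have h3 : I2 - 2*(I1/a)*I1 + a*(I1/a)^2 = I2 - I1^2/a := by field_simp; ring
    linarith [h3 ▸ h0]
  rw [sub_nonneg, div_le_iff₀ ha] at h2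
  linarith [h2]

/-- Quantitative vanishing: if `C a + M a² < 1` then any "focal solution" data on `[0,a]`
vanishes identically. -/
lemma focal_vanish [CompleteSpace E] {τ a : ℝ} (ha : 0 < a) (haτ : a ≤ τ)
    (R : ℝ → E →L[ℝ] E) (hRcont : ContinuousOn R (Set.Icc 0 τ))
    (Q : E →ₗ[ℝ] E →ₗ[ℝ] ℝ)
    (M C : ℝ) (hM0 : 0 ≤ M) (hC0 : 0 ≤ C)
    (hM : ∀ t ∈ Set.Icc (0:ℝ) τ, ‖R t‖ ≤ M)
    (hQ : ∀ x : E, Q x x ≤ C * ‖x‖^2)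
    (hk : C * a + M * a^2 < 1)
    (u : ℝ → E)
    (hu2 : ContDiffOn ℝ 2 u (Set.Icc 0 a))
    (hode : ∀ t ∈ Set.Icc (0:ℝ) a,
      derivWithin (derivWithin u (Set.Icc 0 a)) (Set.Icc 0 a) t + R t (u t) = 0)
    (hbc' : ⟪derivWithin u (Set.Icc 0 a) 0, u 0⟫ = -(Q (u 0) (u 0)))
    (hua : u a = 0) :
    ∀ t ∈ Set.Icc (0:ℝ) a, u t = 0 := by
  set I : Set ℝ := Set.Icc 0 a with hIdef
  have hsub : I ⊆ Set.Icc 0 τ := Set.Icc_subset_Icc le_rfl haτ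
  have hI : UniqueDiffOn ℝ I := uniqueDiffOn_Icc ha
  set u' := derivWithin u I with hu'def
  have hu'cd : ContDiffOn ℝ 1 u' I := hu2.derivWithin hI (by norm_num)
  have hu'cont : ContinuousOn u' I := hu'cd.continuousOn
  have hucont : ContinuousOn u I := hu2.continuousOn
  have hudiff : ∀ t ∈ I, HasDerivWithinAt u (u' t) I t := fun t ht =>
    ((hu2.differentiableOn (by norm_num)) t ht).hasDerivWithinAt
  have hu'diff : ∀ t ∈ I, HasDerivWithinAt u' (derivWithin u' I t) I t := fun t ht =>
    ((hu'cd.differentiableOn (by norm_num)) t ht).hasDerivWithinAt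
  have hode' : ∀ t ∈ I, derivWithin u' I t = -(R t (u t)) := by
    intro t ht
    have := hode t ht
    exact eq_neg_of_add_eq_zero_left this
  have hRu : ContinuousOn (fun t => R t (u t)) I :=
    ContinuousOn.clm_apply (hRcont.mono hsub) hucont
  -- the function F = ‖u'‖² - ⟪u, R u⟫
  set F : ℝ → ℝ := fun t => ‖u' t‖^2 - ⟪u t, R t (u t)⟫ with hFdef
  have hFcont : ContinuousOn F I := ((hu'cont.norm.pow 2).sub (hucont.inner hRu))
  have huIcc : Set.uIcc (0:ℝ) a = I := Set.uIcc_of_le ha.le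
  have hFint : IntervalIntegrable F volume 0 a := (hFcont.mono (by rw [huIcc])).intervalIntegrable
  -- FTC for g = ⟪u, u'⟫
  have hgderiv : ∀ x ∈ Set.Ioo (0:ℝ) a,
      HasDerivWithinAt (fun t => ⟪u t, u' t⟫) (F x) (Set.Ioi x) x := by
    intro x hx
    have hxI : x ∈ I := Set.Ioo_subset_Icc_self hx
    have hnb : I ∈ nhds x := Icc_mem_nhds hx.1 hx.2
    have h1 : HasDerivAt u (u' x) x := (hudiff x hxI).hasDerivAt hnb
    have h2 : HasDerivAt u' (derivWithin u' I x) x := (hu'diff x hxI).hasDerivAt hnb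
    have h3 := HasDerivAt.inner ℝ h1 h2
    have h4 : ⟪u x, derivWithin u' I x⟫ + ⟪u' x, u' x⟫ = F x := by
      rw [hode' x hxI, inner_neg_right, real_inner_self_eq_norm_sq]
      simp only [hFdef]
      ring
    rw [h4] at h3
    exact h3.hasDerivWithinAt
  have hgcont : ContinuousOn (fun t => ⟪u t, u' t⟫) I := hucont.inner hu'cont
  have hFTC : (∫ t in (0:ℝ)..a, F t) = ⟪u a, u' a⟫ - ⟪u 0, u' 0⟫ :=
    intervalIntegral.integral_eq_sub_of_hasDeriv_right_of_le ha.le hgcont hgderiv hFint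
  have hga : ⟪u a, u' a⟫ = (0:ℝ) := by rw [hua]; simp
  have hg0 : ⟪u 0, u' 0⟫ = -(Q (u 0) (u 0)) := by rw [real_inner_comm]; exact hbc'
  have hFval : (∫ t in (0:ℝ)..a, F t) = Q (u 0) (u 0) := by rw [hFTC, hga, hg0]; ring
  -- split the integral
  have hint1 : IntervalIntegrable (fun t => ‖u' t‖^2) volume 0 a :=
    ((hu'cont.norm.pow 2).mono (by rw [huIcc])).intervalIntegrable
  have hint2 : IntervalIntegrable (fun t => ⟪u t, R t (u t)⟫) volume 0 a :=
    ((hucont.inner hRu).mono (by rw [huIcc])).intervalIntegrable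
  set X := ∫ t in (0:ℝ)..a, ‖u' t‖^2 with hXdef
  have hsplit : X - (∫ t in (0:ℝ)..a, ⟪u t, R t (u t)⟫) = Q (u 0) (u 0) := by
    rw [← intervalIntegral.integral_sub hint1 hint2]; exact hFval
  -- the bound A
  set A := ∫ t in (0:ℝ)..a, ‖u' t‖ with hAdef
  have hA0 : 0 ≤ A := intervalIntegral.integral_nonneg ha.le (fun t _ => norm_nonneg _)
  have hnormint : IntervalIntegrable (fun t => ‖u' t‖) volume 0 a :=
    (hu'cont.norm.mono (by rw [huIcc])).intervalIntegrable
  -- pointwise bound ‖u t‖ ≤ A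
  have hbound : ∀ t ∈ I, ‖u t‖ ≤ A := by
    intro t ht
    have ht0 : (0:ℝ) ≤ t := ht.1
    have hta : t ≤ a := ht.2
    have hsub2 : Set.Icc t a ⊆ I := Set.Icc_subset_Icc ht0 le_rfl
    have huIcc2 : Set.uIcc t a = Set.Icc t a := Set.uIcc_of_le hta
    have hintt : IntervalIntegrable u' volume t a :=
      ((hu'cont.mono hsub2).mono (by rw [huIcc2])).intervalIntegrable
    have hFTC2 : (∫ s in t..a, u' s) = u a - u t := by
      apply intervalIntegral.integral_eq_sub_of_hasDeriv_right_of_le hta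
        (hucont.mono hsub2)
      · intro x hx
        have hxI : x ∈ I := ⟨le_of_lt (lt_of_le_of_lt ht0 hx.1), hx.2.le⟩
        have hnb : I ∈ nhds x := Icc_mem_nhds (lt_of_le_of_lt ht0 hx.1) hx.2
        exact (((hudiff x hxI).hasDerivAt hnb)).hasDerivWithinAt
      · exact hintt
    have h5 : ‖u t‖ = ‖∫ s in t..a, u' s‖ := by rw [hFTC2, hua]; simp
    have h6 : ‖∫ s in t..a, u' s‖ ≤ ∫ s in t..a, ‖u' s‖ :=
      intervalIntegral.norm_integral_le_integral_norm hta
    have hint0t : IntervalIntegrable (fun s => ‖u' s‖) volume 0 t := by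
      apply ContinuousOn.intervalIntegrable
      rw [Set.uIcc_of_le ht0]
      exact (hu'cont.norm.mono (Set.Icc_subset_Icc le_rfl hta))
    have hintta : IntervalIntegrable (fun s => ‖u' s‖) volume t a := by
      apply ContinuousOn.intervalIntegrable
      rw [huIcc2]
      exact hu'cont.norm.mono hsub2
    have h7 : (∫ s in (0:ℝ)..t, ‖u' s‖) + (∫ s in t..a, ‖u' s‖) = A :=
      intervalIntegral.integral_add_adjacent_intervals hint0t hintta
    have h8 : 0 ≤ ∫ s in (0:ℝ)..t, ‖u' s‖ :=
      intervalIntegral.integral_nonneg ht0 (fun s _ => norm_nonneg _)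
    calc ‖u t‖ ≤ ∫ s in t..a, ‖u' s‖ := h5 ▸ h6
      _ ≤ A := by linarith
  -- bounds on the RHS
  have hQb : Q (u 0) (u 0) ≤ C * A^2 := by
    have h1 := hQ (u 0)
    have h2 : ‖u 0‖ ≤ A := hbound 0 ⟨le_rfl, ha.le⟩
    have h3 : ‖u 0‖^2 ≤ A^2 := by nlinarith [norm_nonneg (u 0)]
    have h4 := mul_le_mul_of_nonneg_left h3 hC0
    linarith
  have hRb : ∀ t ∈ I, ⟪u t, R t (u t)⟫ ≤ M * A^2 := by
    intro t ht
    have h1 : ⟪u t, R t (u t)⟫ ≤ ‖u t‖ * ‖R t (u t)‖ := real_inner_le_norm _ _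
    have h2 : ‖R t (u t)‖ ≤ ‖R t‖ * ‖u t‖ := (R t).le_opNorm _
    have h3 : ‖R t‖ ≤ M := hM t (hsub ht)
    have h4 : ‖u t‖ ≤ A := hbound t ht
    have h5 : ‖u t‖^2 ≤ A^2 := by nlinarith [norm_nonneg (u t)]
    have h6 : ‖R t‖ * ‖u t‖ ≤ M * ‖u t‖ := mul_le_mul_of_nonneg_right h3 (norm_nonneg _)
    have h7 : ‖u t‖ * ‖R t (u t)‖ ≤ M * ‖u t‖^2 := by nlinarith [norm_nonneg (u t)]
    have h8 : M * ‖u t‖^2 ≤ M * A^2 := mul_le_mul_of_nonneg_left h5 hM0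
    linarith
  have hIR : (∫ t in (0:ℝ)..a, ⟪u t, R t (u t)⟫) ≤ a * (M * A^2) := by
    have h := intervalIntegral.integral_mono_on ha.le hint2 intervalIntegrable_const
      (fun t ht => hRb t ht)
    rw [intervalIntegral.integral_const, smul_eq_mul, sub_zero] at h
    exact h
  have hX0 : 0 ≤ X := intervalIntegral.integral_nonneg ha.le (fun t _ => sq_nonneg _)
  have hCS : A^2 ≤ a * X := cs_aux' ha hu'cont.norm
  -- combine
  have hXle : X ≤ C * A^2 + a * (M * A^2) := by linarith
  have e1 : C * A^2 ≤ C * (a*X) := mul_le_mul_of_nonneg_left hCS hC0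
  have e2 : M * A^2 ≤ M * (a*X) := mul_le_mul_of_nonneg_left hCS hM0
  have e3 : a * (M * A^2) ≤ a * (M * (a*X)) := mul_le_mul_of_nonneg_left e2 ha.le
  have e5 : C * (a*X) + a * (M * (a*X)) = (C*a + M*a^2) * X := by ring
  have e4 : X ≤ (C*a + M*a^2) * X := by linarith
  have hXzero : X = 0 := by
    rcases eq_or_lt_of_le hX0 with h | h
    · exact h.symm
    · exfalso
      have h9 := mul_lt_mul_of_pos_right hk h
      rw [one_mul] at h9
      linarith
  have hA2 : A^2 = 0 := by
    rw [hXzero, mul_zero] at hCS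
    exact le_antisymm hCS (sq_nonneg A)
  have hAzero : A = 0 := pow_eq_zero_iff two_ne_zero |>.mp hA2
  intro t ht
  have := hbound t ht
  rw [hAzero] at this
  exact norm_le_zero_iff.mp this

/-- **(Hermann, Lemma 31.5.)** If `ε ∈ (0,τ]` is sufficiently small, there are no focal
points on the interval `(0,ε]` for `J = d²/dt² + R_t` and boundary condition `(E₀, Q)`. -/
theorem no_focal_points_near_zero
    {E : Type*} [NormedAddCommGroup E] [InnerProductSpace ℝ E] [FiniteDimensional ℝ E]
    (τ : ℝ) (hτ : 0 < τ)
    (R : ℝ → E →L[ℝ] E) (hRcont : ContinuousOn R (Set.Icc 0 τ))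
    (hRsa : ∀ t ∈ Set.Icc (0:ℝ) τ, ∀ u v : E, ⟪R t u, v⟫ = ⟪u, R t v⟫)
    (E₀ : Submodule ℝ E) (Q : E →ₗ[ℝ] E →ₗ[ℝ] ℝ)
    (hQsymm : ∀ x ∈ E₀, ∀ y ∈ E₀, Q x y = Q y x) :
    ∃ ε ∈ Set.Ioc (0:ℝ) τ, ∀ a ∈ Set.Ioc (0:ℝ) ε, ¬ IsFocalPoint R E₀ Q τ a := by
  -- bound on R
  obtain ⟨M, hM0, hM⟩ : ∃ M, 0 ≤ M ∧ ∀ t ∈ Set.Icc (0:ℝ) τ, ‖R t‖ ≤ M := by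
    obtain ⟨M₀, hM₀⟩ := (isCompact_Icc (a := (0:ℝ)) (b := τ)).exists_bound_of_continuousOn hRcont
    exact ⟨max M₀ 0, le_max_right _ _, fun t ht => (hM₀ t ht).trans (le_max_left _ _)⟩
  -- bound on Q
  obtain ⟨C, hC0, hQbound⟩ : ∃ C, 0 ≤ C ∧ ∀ x : E, Q x x ≤ C * ‖x‖^2 := by
    set Q₂ : E →L[ℝ] (E →L[ℝ] ℝ) := LinearMap.toContinuousLinearMap
      ((LinearMap.toContinuousLinearMap : (E →ₗ[ℝ] ℝ) ≃ₗ[ℝ] (E →L[ℝ] ℝ)).toLinearMap.comp Q)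
      with hQ₂
    refine ⟨‖Q₂‖, ContinuousLinearMap.opNorm_nonneg Q₂, fun x => ?_⟩
    have h1 : Q x x = Q₂ x x := rfl
    have h2 : ‖Q₂ x x‖ ≤ ‖Q₂ x‖ * ‖x‖ := (Q₂ x).le_opNorm x
    have h3 : ‖Q₂ x‖ ≤ ‖Q₂‖ * ‖x‖ := Q₂.le_opNorm x
    rw [h1]
    calc Q₂ x x ≤ |Q₂ x x| := le_abs_self _
      _ = ‖Q₂ x x‖ := (Real.norm_eq_abs _).symm
      _ ≤ ‖Q₂ x‖ * ‖x‖ := h2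
      _ ≤ ‖Q₂‖ * ‖x‖ * ‖x‖ := mul_le_mul_of_nonneg_right h3 (norm_nonneg _)
      _ = ‖Q₂‖ * ‖x‖^2 := by ring
  -- choose ε
  have hden : (0:ℝ) < 2*(C+M+1) := by linarith
  set ε := min τ (1 / (2*(C+M+1))) with hεdef
  have hε0 : 0 < ε := lt_min hτ (by positivity)
  refine ⟨ε, ⟨hε0, min_le_left _ _⟩, ?_⟩
  rintro a ⟨ha0, haε⟩ ⟨⟨-, haτ⟩, u, ⟨hu2, hode, hu0mem, hbc, hua⟩, t₀, ht₀, hne⟩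
  have ha1 : a ≤ 1/(2*(C+M+1)) := haε.trans (min_le_right _ _)
  have h2a : a * (2*(C+M+1)) ≤ 1 := by rw [← le_div_iff₀ hden]; exact ha1
  have hahalf : 2*a ≤ 1 := by nlinarith [mul_nonneg hC0 ha0.le, mul_nonneg hM0 ha0.le]
  have hk : C * a + M * a^2 < 1 := by
    nlinarith [mul_nonneg hC0 ha0.le, mul_nonneg hM0 ha0.le,
      mul_nonneg (mul_nonneg hM0 ha0.le) (by linarith : (0:ℝ) ≤ 1 - 2*a), ha0]
  have hbc' : ⟪derivWithin u (Set.Icc 0 a) 0, u 0⟫ = -(Q (u 0) (u 0)) := hbc (u 0) hu0mem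
  exact hne (focal_vanish ha0 haτ R hRcont Q M C hM0 hC0 hM hQbound hk u hu2 hode hbc' hua t₀ ht₀)
end

section
/- Let E be a finite-dimensional real inner product space, τ > 0, and t ↦ R_t a continuous family of self-adjoint operators on E. If t₀ ∈ (0,τ] is such that 0 and t₀ are mutually conjugate, then there exists ε > 0 such that for every t ∈ [t₀-ε, t₀+ε] ∩ (0,τ] with t ≠ t₀, the points 0 and t are not mutually conjugate. -/
/-!
For a conjugate point `s` of `0` let `v_s` be the solution with `v_s 0 = v_s s = 0` and
`‖v_s' 0‖ = 1`; Grönwall's inequality bounds `‖v_s' s‖` above and below uniformly in `s`.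
For conjugate points `a < b` the Wronskian of `v_a` and `v_b` vanishes, so
`⟪v_a' a, v_b a⟫ = 0`, while Taylor expansion at `b` gives
`v_b a = (a - b) • v_b' b + O((b - a)²)`; hence `|⟪v_a' a, v_b' b⟫| = O(b - a)`.
Conjugate points accumulating at `t₀` would therefore produce vectors bounded away from `0`
and pairwise almost orthogonal, and a convergent subsequence in the finite-dimensional
space `E` would have a limit `q` with `⟪q, q⟫ = 0 ≠ ‖q‖`.
-/

open scoped RealInnerProductSpace

variable {E : Type*} [NormedAddCommGroup E] [InnerProductSpace ℝ E]

open Set Filter Topology Real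

section Gronwall

variable {F : Type*} [NormedAddCommGroup F] [NormedSpace ℝ F]

theorem norm_le_exp_mul_norm_of_norm_deriv_le_of_le {g g' : ℝ → F} {K s t : ℝ} (hst : s ≤ t)
    (hg : ∀ x ∈ Icc s t, HasDerivWithinAt g (g' x) (Icc s t) x)
    (hbound : ∀ x ∈ Icc s t, ‖g' x‖ ≤ K * ‖g x‖) :
    ‖g t‖ ≤ exp (K * (t - s)) * ‖g s‖ := by
  have h := norm_le_gronwallBound_of_norm_deriv_right_le (δ := ‖g s‖) (ε := 0)
    (fun x hx => (hg x hx).continuousWithinAt)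
    (fun x hx => (hg x (Ico_subset_Icc_self hx)).mono_of_mem_nhdsWithin
      (Icc_mem_nhdsGE_of_mem hx))
    le_rfl (fun x hx => by simpa using hbound x (Ico_subset_Icc_self hx)) t ⟨hst, le_rfl⟩
  rwa [gronwallBound_ε0, mul_comm] at h

theorem norm_le_exp_mul_norm_of_norm_deriv_le {S : Set ℝ} (hS : S.OrdConnected) {g g' : ℝ → F}
    {K : ℝ} (hg : ∀ x ∈ S, HasDerivWithinAt g (g' x) S x)
    (hbound : ∀ x ∈ S, ‖g' x‖ ≤ K * ‖g x‖) {s t : ℝ} (hs : s ∈ S) (ht : t ∈ S) :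
    ‖g t‖ ≤ exp (K * |t - s|) * ‖g s‖ := by
  rcases le_total s t with hst | hts
  · have hsub : Icc s t ⊆ S := hS.out hs ht
    rw [abs_of_nonneg (sub_nonneg.2 hst)]
    exact norm_le_exp_mul_norm_of_norm_deriv_le_of_le hst
      (fun x hx => (hg x (hsub hx)).mono hsub) (fun x hx => hbound x (hsub hx))
  · have hsub : Icc t s ⊆ S := hS.out ht hs
    have hmaps : MapsTo (fun x => t + s - x) (Icc t s) (Icc t s) :=
      fun x hx => ⟨by linarith [hx.2], by linarith [hx.1]⟩
    have h := norm_le_exp_mul_norm_of_norm_deriv_le_of_le (g := g ∘ fun x => t + s - x)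
      (g' := fun x => -g' (t + s - x)) hts
      (fun x hx => by
        simpa using ((hg _ (hsub (hmaps hx))).mono hsub).scomp x
          ((hasDerivAt_id x).const_sub (t + s)).hasDerivWithinAt hmaps)
      (fun x hx => by simpa using hbound _ (hsub (hmaps hx)))
    rw [abs_of_nonpos (sub_nonpos.2 hts), neg_sub]
    simpa using h

end Gronwall

section Jacobi

variable {F : Type*} [NormedAddCommGroup F] [NormedSpace ℝ F]
  {R : ℝ → F →L[ℝ] F} {S : Set ℝ} {u u' : ℝ → F} {M : ℝ}

/-- `u'' + R_t u = 0` on `S` as a first-order system for the pair `(u, u')`; unlike the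
`derivWithin` formulation this is monotone in `S`. -/
def IsJacobiSolutionOn (R : ℝ → F →L[ℝ] F) (S : Set ℝ) (u u' : ℝ → F) : Prop :=
  ∀ t ∈ S, HasDerivWithinAt u (u' t) S t ∧ HasDerivWithinAt u' (-R t (u t)) S t

theorem isJacobiSolutionOn_of_contDiffOn {a b : ℝ} (hab : a < b)
    (hu : ContDiffOn ℝ 2 u (Icc a b))
    (heq : ∀ t ∈ Icc a b,
      derivWithin (derivWithin u (Icc a b)) (Icc a b) t + R t (u t) = 0) :
    IsJacobiSolutionOn R (Icc a b) u (derivWithin u (Icc a b)) := by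
  intro t ht
  refine ⟨(hu.differentiableOn (by norm_num) t ht).hasDerivWithinAt, ?_⟩
  rw [← eq_neg_of_add_eq_zero_left (heq t ht)]
  exact ((hu.derivWithin (m := 1) (uniqueDiffOn_Icc hab) (by norm_num)).differentiableOn
    (by norm_num) t ht).hasDerivWithinAt

namespace IsJacobiSolutionOn

theorem mono {T : Set ℝ} (h : IsJacobiSolutionOn R S u u') (hTS : T ⊆ S) :
    IsJacobiSolutionOn R T u u' :=
  fun t ht => ⟨(h t (hTS ht)).1.mono hTS, (h t (hTS ht)).2.mono hTS⟩

theorem const_smul (h : IsJacobiSolutionOn R S u u') (c : ℝ) :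
    IsJacobiSolutionOn R S (fun t => c • u t) (fun t => c • u' t) := by
  intro t ht
  refine ⟨(h t ht).1.const_smul c, ?_⟩
  have h' := (h t ht).2.const_smul c
  rw [smul_neg, ← map_smul] at h'
  exact h'

theorem norm_prod_le_exp_mul (h : IsJacobiSolutionOn R S u u') (hS : S.OrdConnected)
    (hM : ∀ t ∈ S, ‖R t‖ ≤ M) {s t : ℝ} (hs : s ∈ S) (ht : t ∈ S) :
    ‖(u t, u' t)‖ ≤ exp (max 1 M * |t - s|) * ‖(u s, u' s)‖ := by
  refine norm_le_exp_mul_norm_of_norm_deriv_le hS (g := fun x => (u x, u' x))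
    (g' := fun x => (u' x, -R x (u x))) (fun x hx => (h x hx).1.prodMk (h x hx).2)
    (fun x hx => ?_) hs ht
  have hK : 0 ≤ max 1 M := zero_le_one.trans (le_max_left 1 M)
  simp only [Prod.norm_mk, norm_neg]
  refine max_le ?_ ?_
  · calc ‖u' x‖ ≤ 1 * max ‖u x‖ ‖u' x‖ := by rw [one_mul]; exact le_max_right _ _
      _ ≤ max 1 M * max ‖u x‖ ‖u' x‖ := by gcongr; exact le_max_left 1 M
  · calc ‖R x (u x)‖ ≤ M * ‖u x‖ := (R x).le_of_opNorm_le (hM x hx) _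
      _ ≤ max 1 M * ‖u x‖ := by gcongr; exact le_max_right 1 M
      _ ≤ max 1 M * max ‖u x‖ ‖u' x‖ := by gcongr; exact le_max_left _ _

theorem norm_sub_sub_smul_le {β : ℝ} (h : IsJacobiSolutionOn R S u u') (hS : S.OrdConnected)
    (hM : ∀ t ∈ S, ‖R t‖ ≤ M) (hβ : ∀ t ∈ S, ‖u t‖ ≤ β) {t₁ t₂ : ℝ} (h₁ : t₁ ∈ S)
    (h₂ : t₂ ∈ S) :
    ‖u t₁ - u t₂ - (t₁ - t₂) • u' t₂‖ ≤ M * β * (t₁ - t₂) ^ 2 := by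
  have hI : uIcc t₁ t₂ ⊆ S := hS.uIcc_subset h₁ h₂
  have hMβ : 0 ≤ M * β :=
    mul_nonneg ((norm_nonneg _).trans (hM t₁ h₁)) ((norm_nonneg _).trans (hβ t₁ h₁))
  have hderiv : ∀ t ∈ uIcc t₁ t₂, ‖u' t - u' t₂‖ ≤ M * β * |t₁ - t₂| := by
    intro t ht
    calc ‖u' t - u' t₂‖ ≤ M * β * ‖t - t₂‖ :=
          (convex_uIcc t₁ t₂).norm_image_sub_le_of_norm_hasDerivWithin_le
            (fun x hx => (h x (hI hx)).2.mono hI)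
            (fun x hx => by
              rw [norm_neg]
              exact (R x).le_of_opNorm_le_of_le (hM x (hI hx)) (hβ x (hI hx)))
            right_mem_uIcc ht
      _ ≤ M * β * |t₁ - t₂| := by
          rw [Real.norm_eq_abs, abs_sub_comm t, abs_sub_comm t₁]
          exact mul_le_mul_of_nonneg_left (abs_sub_right_of_mem_uIcc ht) hMβ
  have hφ : ∀ t ∈ uIcc t₁ t₂,
      HasDerivWithinAt (fun x => u x - x • u' t₂) (u' t - u' t₂) (uIcc t₁ t₂) t :=
    fun t ht => ((h t (hI ht)).1.mono hI).sub
      (by simpa using ((hasDerivAt_id t).smul_const (u' t₂)).hasDerivWithinAt)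
  calc ‖u t₁ - u t₂ - (t₁ - t₂) • u' t₂‖
        = ‖(u t₁ - t₁ • u' t₂) - (u t₂ - t₂ • u' t₂)‖ := by rw [sub_smul]; abel_nf
    _ ≤ M * β * |t₁ - t₂| * ‖t₁ - t₂‖ :=
        (convex_uIcc t₁ t₂).norm_image_sub_le_of_norm_hasDerivWithin_le hφ hderiv
          right_mem_uIcc left_mem_uIcc
    _ = M * β * (t₁ - t₂) ^ 2 := by rw [Real.norm_eq_abs, mul_assoc, ← abs_mul, ← sq, abs_sq]

end IsJacobiSolutionOn

end Jacobi

namespace IsJacobiSolutionOn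

variable {R : ℝ → E →L[ℝ] E} {S : Set ℝ} {u u' v v' : ℝ → E} {M : ℝ}

theorem inner_wronskian_eq (hu : IsJacobiSolutionOn R S u u') (hv : IsJacobiSolutionOn R S v v')
    (hS : S.OrdConnected) (hR : ∀ t ∈ S, ∀ x y : E, ⟪R t x, y⟫ = ⟪x, R t y⟫) {s t : ℝ}
    (hs : s ∈ S) (ht : t ∈ S) :
    ⟪u' t, v t⟫ - ⟪u t, v' t⟫ = ⟪u' s, v s⟫ - ⟪u s, v' s⟫ := by
  have hI : uIcc s t ⊆ S := hS.uIcc_subset hs ht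
  have hW : ∀ x ∈ uIcc s t, HasDerivWithinAt (fun y => ⟪u' y, v y⟫ - ⟪u y, v' y⟫) 0
      (uIcc s t) x := by
    intro x hx
    have hd := (((hu x (hI hx)).2.mono hI).inner ℝ ((hv x (hI hx)).1.mono hI)).sub
      (((hu x (hI hx)).1.mono hI).inner ℝ ((hv x (hI hx)).2.mono hI))
    rw [inner_neg_left, inner_neg_right, hR x (hI hx)] at hd
    exact hd.congr_deriv (by ring)
  have h := (convex_uIcc s t).norm_image_sub_le_of_norm_hasDerivWithin_le (C := 0) hW (by simp)
    left_mem_uIcc right_mem_uIcc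
  rwa [zero_mul, norm_le_zero_iff, sub_eq_zero] at h

/-- The Wronskian forces `⟪u' a, v a⟫ = 0`, while `v a ≈ (a - b) • v' b` to second order. -/
theorem abs_inner_deriv_le {c a b α β : ℝ}
    (hRsa : ∀ t ∈ Icc c b, ∀ x y : E, ⟪R t x, y⟫ = ⟪x, R t y⟫)
    (hM : ∀ t ∈ Icc c b, ‖R t‖ ≤ M) (hca : c ≤ a) (hab : a < b)
    (hu : IsJacobiSolutionOn R (Icc c a) u u') (hv : IsJacobiSolutionOn R (Icc c b) v v')
    (huc : u c = 0) (hua : u a = 0) (hvc : v c = 0) (hvb : v b = 0)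
    (hα : ‖u' a‖ ≤ α) (hβ : ∀ t ∈ Icc c b, ‖v t‖ ≤ β) :
    |⟪u' a, v' b⟫| ≤ α * (M * β) * (b - a) := by
  have hsub : Icc c a ⊆ Icc c b := Icc_subset_Icc_right hab.le
  have ha : a ∈ Icc c a := right_mem_Icc.2 hca
  have hc : c ∈ Icc c b := left_mem_Icc.2 (hca.trans hab.le)
  have hMβ : 0 ≤ M * β :=
    mul_nonneg ((norm_nonneg _).trans (hM c hc)) ((norm_nonneg _).trans (hβ c hc))
  have horth : ⟪u' a, v a⟫ = 0 := by
    simpa [huc, hvc, hua] using hu.inner_wronskian_eq (hv.mono hsub) ordConnected_Icc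
      (fun t ht => hRsa t (hsub ht)) (left_mem_Icc.2 hca) ha
  have htaylor := hv.norm_sub_sub_smul_le ordConnected_Icc hM hβ (hsub ha)
    (right_mem_Icc.2 (hca.trans hab.le))
  rw [hvb, sub_zero] at htaylor
  have key : (b - a) * |⟪u' a, v' b⟫| ≤ (b - a) * (α * (M * β) * (b - a)) :=
    calc (b - a) * |⟪u' a, v' b⟫| = |⟪u' a, v a - (a - b) • v' b⟫| := by
          rw [inner_sub_right, horth, real_inner_smul_right, zero_sub, abs_neg, abs_mul,
            abs_of_neg (sub_neg.2 hab), neg_sub]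
      _ ≤ ‖u' a‖ * ‖v a - (a - b) • v' b‖ := abs_real_inner_le_norm _ _
      _ ≤ α * (M * β * (a - b) ^ 2) := by
          gcongr
          exact (norm_nonneg _).trans hα
      _ = (b - a) * (α * (M * β) * (b - a)) := by ring
  exact le_of_mul_le_mul_left key (sub_pos.2 hab)

end IsJacobiSolutionOn

theorem MutuallyConjugate.exists_isJacobiSolutionOn {R : ℝ → E →L[ℝ] E} {a b M : ℝ}
    (h : MutuallyConjugate R a b) (hM : ∀ t ∈ Icc a b, ‖R t‖ ≤ M) :
    ∃ v v' : ℝ → E, IsJacobiSolutionOn R (Icc a b) v v' ∧ v a = 0 ∧ v b = 0 ∧ ‖v' a‖ = 1 := by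
  obtain ⟨hab, v, hv, heq, hva, hvb, t, ht, hvt⟩ := h
  have hsol := isJacobiSolutionOn_of_contDiffOn hab hv heq
  set v' := derivWithin v (Icc a b)
  have hv'a : v' a ≠ 0 := by
    intro h0
    have h := hsol.norm_prod_le_exp_mul ordConnected_Icc hM (left_mem_Icc.2 hab.le) ht
    simp only [hva, h0, Prod.norm_mk, norm_zero, max_self, mul_zero] at h
    exact hvt (norm_le_zero_iff.1 ((le_max_left _ _).trans h))
  refine ⟨fun t => ‖v' a‖⁻¹ • v t, fun t => ‖v' a‖⁻¹ • v' t, hsol.const_smul _, by simp [hva],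
    by simp [hvb], ?_⟩
  simp [norm_smul, hv'a]

theorem MutuallyConjugate.exists_isJacobiSolutionOn_norm_le {R : ℝ → E →L[ℝ] E} {a b M L : ℝ}
    (h : MutuallyConjugate R a b) (hM : ∀ t ∈ Icc a b, ‖R t‖ ≤ M) (hL : b - a ≤ L) :
    ∃ v v' : ℝ → E, IsJacobiSolutionOn R (Icc a b) v v' ∧ v a = 0 ∧ v b = 0 ∧
      (∀ t ∈ Icc a b, ‖(v t, v' t)‖ ≤ exp (max 1 M * L)) ∧ (exp (max 1 M * L))⁻¹ ≤ ‖v' b‖ := by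
  obtain ⟨v, v', hv, hva, hvb, hv'a⟩ := h.exists_isJacobiSolutionOn hM
  have hab : a ≤ b := h.1.le
  have hnorm_a : ‖(v a, v' a)‖ = 1 := by simp [hva, hv'a]
  have hexp : ∀ t ∈ Icc a b, exp (max 1 M * |t - a|) ≤ exp (max 1 M * L) := by
    intro t ht
    gcongr
    rw [abs_of_nonneg (sub_nonneg.2 ht.1)]
    linarith [ht.2]
  refine ⟨v, v', hv, hva, hvb, fun t ht => ?_, ?_⟩
  · calc ‖(v t, v' t)‖ ≤ exp (max 1 M * |t - a|) * ‖(v a, v' a)‖ :=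
          hv.norm_prod_le_exp_mul ordConnected_Icc hM (left_mem_Icc.2 hab) ht
      _ ≤ exp (max 1 M * L) := by rw [hnorm_a, mul_one]; exact hexp t ht
  · have hb := right_mem_Icc.2 hab
    have h1 : 1 ≤ exp (max 1 M * L) * ‖v' b‖ := by
      calc (1 : ℝ) = ‖(v a, v' a)‖ := hnorm_a.symm
        _ ≤ exp (max 1 M * |a - b|) * ‖(v b, v' b)‖ :=
            hv.norm_prod_le_exp_mul ordConnected_Icc hM hb (left_mem_Icc.2 hab)
        _ ≤ exp (max 1 M * L) * ‖v' b‖ := by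
            rw [abs_sub_comm, hvb, Prod.norm_mk, norm_zero, max_eq_right (norm_nonneg _)]
            exact mul_le_mul_of_nonneg_right (hexp b hb) (norm_nonneg _)
    rw [inv_le_iff_one_le_mul₀ (exp_pos _), mul_comm]
    exact h1

/-- A limit point `q` of `p s` as `s → t₀` would satisfy `⟪q, q⟫ = 0` while `c ≤ ‖q‖`. -/
theorem notMem_closure_diff_singleton_of_abs_inner_le [ProperSpace E] {S : Set ℝ} {p : ℝ → E}
    {t₀ c C K : ℝ} (hc : 0 < c) (hlow : ∀ s ∈ S, c ≤ ‖p s‖) (hup : ∀ s ∈ S, ‖p s‖ ≤ C)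
    (hpair : ∀ s ∈ S, ∀ s' ∈ S, s < s' → |⟪p s, p s'⟫| ≤ K * (s' - s)) :
    t₀ ∉ closure (S \ {t₀}) := by
  have hpair' : ∀ s ∈ S, ∀ s' ∈ S, s ≠ s' → |⟪p s, p s'⟫| ≤ K * |s - s'| := by
    intro s hs s' hs' hne
    rcases hne.lt_or_gt with hlt | hlt
    · rw [abs_sub_comm, abs_of_pos (sub_pos.2 hlt)]; exact hpair s hs s' hs' hlt
    · rw [real_inner_comm, abs_of_pos (sub_pos.2 hlt)]; exact hpair s' hs' s hs hlt
  intro hmem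
  obtain ⟨x, hxS, hx⟩ := mem_closure_iff_seq_limit.1 hmem
  obtain ⟨q, -, φ, hφ, hq⟩ := (isCompact_closedBall (0 : E) C).tendsto_subseq
    (x := fun n => p (x n)) (fun n => by simpa using hup _ (hxS n).1)
  have hy : Tendsto (x ∘ φ) atTop (𝓝 t₀) := hx.comp hφ.tendsto_atTop
  have hpq : ∀ k, |⟪p (x (φ k)), q⟫| ≤ K * |x (φ k) - t₀| := by
    intro k
    refine le_of_tendsto_of_tendsto (tendsto_const_nhds.inner hq).abs
      ((tendsto_const_nhds.sub hy).abs.const_mul K) ?_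
    filter_upwards [hy.eventually_ne (notMem_singleton_iff.1 (hxS (φ k)).2).symm] with l hl
    exact hpair' _ (hxS _).1 _ (hxS _).1 (Ne.symm hl)
  have hqq : |⟪q, q⟫| ≤ K * |t₀ - t₀| :=
    le_of_tendsto_of_tendsto (hq.inner tendsto_const_nhds).abs
      ((hy.sub tendsto_const_nhds).abs.const_mul K) (Eventually.of_forall hpq)
  rw [sub_self, abs_zero, mul_zero, abs_nonpos_iff, inner_self_eq_zero] at hqq
  have hcq : c ≤ ‖q‖ := ge_of_tendsto hq.norm (Eventually.of_forall fun k => hlow _ (hxS _).1)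
  rw [hqq, norm_zero] at hcq
  exact hc.not_ge hcq

theorem conjugate_points_isolated_general
    {E : Type*} [NormedAddCommGroup E] [InnerProductSpace ℝ E] [FiniteDimensional ℝ E]
    (τ : ℝ)
    (R : ℝ → E →L[ℝ] E) (hRcont : ContinuousOn R (Set.Icc 0 τ))
    (hRsa : ∀ t ∈ Set.Icc (0:ℝ) τ, ∀ u v : E, ⟪R t u, v⟫ = ⟪u, R t v⟫)
    (t₀ : ℝ) :
    ∃ ε > (0:ℝ), ∀ t ∈ Set.Icc (t₀ - ε) (t₀ + ε) ∩ Set.Ioc (0:ℝ) τ,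
      t ≠ t₀ → ¬ MutuallyConjugate R 0 t := by
  obtain ⟨M, hM⟩ := isCompact_Icc.exists_bound_of_continuousOn hRcont
  set S := {t | t ∈ Ioc 0 τ ∧ MutuallyConjugate R 0 t}
  set B := exp (max 1 M * τ)
  have hsub : ∀ t ∈ S, Icc 0 t ⊆ Icc 0 τ := fun t ht => Icc_subset_Icc_right ht.1.2
  have hwit := fun t (ht : t ∈ S) => ht.2.exists_isJacobiSolutionOn_norm_le
    (L := τ) (fun s hs => hM s (hsub t ht hs)) (by linarith [ht.1.2])
  choose! v v' hv hv0 hvt hup hlow using hwit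
  have hend : ∀ t ∈ S, ‖v' t t‖ ≤ B :=
    fun t ht => (norm_snd_le _).trans (hup t ht t (right_mem_Icc.2 ht.1.1.le))
  have hiso : t₀ ∉ closure (S \ {t₀}) :=
    notMem_closure_diff_singleton_of_abs_inner_le (p := fun t => v' t t)
      (inv_pos.2 (exp_pos _)) hlow hend fun s hs s' hs' hss' =>
        (hv s hs).abs_inner_deriv_le (fun t ht => hRsa t (hsub s' hs' ht))
          (fun t ht => hM t (hsub s' hs' ht)) hs.1.1.le hss' (hv s' hs') (hv0 s hs)
          (hvt s hs) (hv0 s' hs') (hvt s' hs') (hend s hs)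
          (fun t ht => (norm_fst_le _).trans (hup s' hs' t ht))
  obtain ⟨ε, hε, hfar⟩ : ∃ ε > 0, ∀ t ∈ S \ {t₀}, ε ≤ dist t₀ t := by
    simpa [Metric.mem_closure_iff] using hiso
  refine ⟨ε / 2, half_pos hε, fun t ⟨htε, htτ⟩ hne hconj => ?_⟩
  have hfar_t := hfar t ⟨⟨htτ, hconj⟩, hne⟩
  rw [Real.dist_eq, le_abs] at hfar_t
  rcases hfar_t with h | h <;> linarith [htε.1, htε.2]

/-- If `0` and `t₀ ∈ (0,τ]` are mutually conjugate, then for sufficiently small `ε > 0`,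
`0` is not mutually conjugate to any `t ≠ t₀` in `[t₀-ε, t₀+ε] ∩ (0,τ]`. -/
theorem conjugate_points_isolated
    {E : Type*} [NormedAddCommGroup E] [InnerProductSpace ℝ E] [FiniteDimensional ℝ E]
    (τ : ℝ) (hτ : 0 < τ)
    (R : ℝ → E →L[ℝ] E) (hRcont : ContinuousOn R (Set.Icc 0 τ))
    (hRsa : ∀ t ∈ Set.Icc (0:ℝ) τ, ∀ u v : E, ⟪R t u, v⟫ = ⟪u, R t v⟫)
    (t₀ : ℝ) (ht₀ : t₀ ∈ Set.Ioc (0:ℝ) τ) (hconj : MutuallyConjugate R 0 t₀) :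
    ∃ ε > (0:ℝ), ∀ t ∈ Set.Icc (t₀ - ε) (t₀ + ε) ∩ Set.Ioc (0:ℝ) τ,
      t ≠ t₀ → ¬ MutuallyConjugate R 0 t :=
  conjugate_points_isolated_general τ R hRcont hRsa t₀
end
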